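/- arXiv:2102.13434 — 6 statements merged into one kernel-verified Lean document; each statement's English description precedes it below -/
import Mathlib

section
/- For a normal random variable with mean μ and standard deviation σ > 0, and any ρ ∈ (0,1), the shortest interval containing probability mass ρ is centered at μ and has length 2^{3/2} · erf⁻¹(ρ) · σ, where erf⁻¹ is the inverse of the Gaussian error function. -/
open MeasureTheory ProbabilityTheory

/-- The Gaussian error function `erf z = (2/√π) ∫₀^z e^{-t²} dt`. -/
noncomputable def erf (z : ℝ) : ℝ :=
  (2 / Real.sqrt Real.pi) * ∫ t in (0:ℝ)..z, Real.exp (-t ^ 2)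

/-- The inverse of the Gaussian error function. -/
noncomputable def erfInv : ℝ → ℝ := Function.invFun erf

section Aux

open Real Set Filter intervalIntegral

noncomputable def Egauss (z : ℝ) : ℝ := ∫ t in (0:ℝ)..z, Real.exp (-t ^ 2)

lemma gcont : Continuous fun t : ℝ => Real.exp (-t ^ 2) := by continuity

lemma gint (a b : ℝ) : IntervalIntegrable (fun t : ℝ => Real.exp (-t ^ 2)) volume a b :=
  gcont.intervalIntegrable a b

lemma Egauss_sub (a b : ℝ) :
    Egauss b - Egauss a = ∫ t in a..b, Real.exp (-t ^ 2) :=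
  intervalIntegral.integral_interval_sub_left (gint 0 b) (gint 0 a)

lemma Egauss_strictMono : StrictMono Egauss := by
  intro a b hab
  have h := intervalIntegral.intervalIntegral_pos_of_pos (f := fun t : ℝ => Real.exp (-t ^ 2))
    (gint a b) (fun x => Real.exp_pos _) hab
  rw [← Egauss_sub] at h
  linarith

lemma Egauss_neg (z : ℝ) : Egauss (-z) = -Egauss z := by
  have h := intervalIntegral.integral_comp_neg (a := (0:ℝ)) (b := z)
    (fun t : ℝ => Real.exp (-t ^ 2))
  simp only [neg_neg, neg_zero] at h
  have h2 : (∫ t in (0:ℝ)..z, Real.exp (-(-t) ^ 2)) = Egauss z := by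
    simp [Egauss]
  rw [h2] at h
  rw [Egauss, intervalIntegral.integral_symm, ← h]

lemma Egauss_cont : Continuous Egauss :=
  intervalIntegral.continuous_primitive gint 0

lemma Egauss_tendsto : Tendsto Egauss atTop (nhds (Real.sqrt π / 2)) := by
  have hi : IntegrableOn (fun t : ℝ => Real.exp (-t ^ 2)) (Ioi 0) := by
    have := (integrable_exp_neg_mul_sq (b := (1:ℝ)) one_pos).integrableOn (s := Ioi 0)
    simpa using this
  have h := intervalIntegral_tendsto_integral_Ioi (μ := volume) 0 hi tendsto_id
  have h2 : (∫ t in Ioi (0:ℝ), Real.exp (-t ^ 2)) = Real.sqrt π / 2 := by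
    have := integral_gaussian_Ioi (1:ℝ)
    simpa using this
  rw [h2] at h
  exact h

lemma sqrt_pi_pos : 0 < Real.sqrt π := Real.sqrt_pos.mpr Real.pi_pos

lemma erf_eq' (z : ℝ) : erf z = (2 / Real.sqrt π) * Egauss z := rfl

lemma erf_zero : erf 0 = 0 := by simp [erf]

lemma erf_strictMono : StrictMono erf := by
  intro a b hab
  have := Egauss_strictMono hab
  have h2 : (0:ℝ) < 2 / Real.sqrt π := by positivity
  rw [erf_eq', erf_eq']
  exact (mul_lt_mul_iff_right₀ h2).mpr this

lemma erf_tendsto : Tendsto erf atTop (nhds 1) := by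
  have h := Egauss_tendsto.const_mul (2 / Real.sqrt π)
  have he : 2 / Real.sqrt π * (Real.sqrt π / 2) = 1 := by
    field_simp
  rw [he] at h
  exact h

lemma exists_erf_eq {ρ : ℝ} (hρ : ρ ∈ Set.Ioo (0:ℝ) 1) : ∃ z, erf z = ρ := by
  have h := erf_tendsto.eventually (eventually_gt_nhds hρ.2)
  obtain ⟨z, hz⟩ := h.exists
  have hz0 : (0:ℝ) ≤ z := by
    by_contra hzneg
    push_neg at hzneg
    have := erf_strictMono hzneg
    rw [erf_zero] at this
    nlinarith [hρ.1]
  have hcont : ContinuousOn erf (Icc 0 z) := by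
    apply Continuous.continuousOn
    exact continuous_const.mul Egauss_cont
  have hiv := intermediate_value_Icc hz0 hcont
  have hmem : ρ ∈ Icc (erf 0) (erf z) := by
    rw [erf_zero]
    exact ⟨hρ.1.le, hz.le⟩
  obtain ⟨x, _, hx⟩ := hiv hmem
  exact ⟨x, hx⟩

lemma erf_erfInv {ρ : ℝ} (hρ : ρ ∈ Set.Ioo (0:ℝ) 1) : erf (erfInv ρ) = ρ :=
  Function.invFun_eq (exists_erf_eq hρ)

lemma erfInv_pos {ρ : ℝ} (hρ : ρ ∈ Set.Ioo (0:ℝ) 1) : 0 < erfInv ρ := by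
  have h := erf_erfInv hρ
  by_contra hneg
  push_neg at hneg
  rcases eq_or_lt_of_le hneg with h0 | h0
  · rw [h0] at h; rw [erf_zero] at h; exact hρ.1.ne h
  · have := erf_strictMono h0
    rw [erf_zero, h] at this
    exact absurd hρ.1 (not_lt.mpr this.le)

end Aux

section Gauss

open Real Set Filter intervalIntegral

variable {m σ : ℝ}

lemma pdf_eq (hσ : 0 < σ) (x : ℝ) :
    gaussianPDFReal m (Real.toNNReal (σ ^ 2)) x
      = (Real.sqrt (2 * π * σ ^ 2))⁻¹ * Real.exp (-(x - m) ^ 2 / (2 * σ ^ 2)) := by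
  rw [gaussianPDFReal]
  rw [Real.coe_toNNReal _ (sq_nonneg σ)]

lemma pdf_cont (hσ : 0 < σ) :
    Continuous (gaussianPDFReal m (Real.toNNReal (σ ^ 2))) := by
  have h : gaussianPDFReal m (Real.toNNReal (σ ^ 2))
      = fun x => (Real.sqrt (2 * π * σ ^ 2))⁻¹ * Real.exp (-(x - m) ^ 2 / (2 * σ ^ 2)) := by
    funext x; exact pdf_eq hσ x
  rw [h]
  continuity

lemma pdf_pos (hσ : 0 < σ) (x : ℝ) :
    0 < gaussianPDFReal m (Real.toNNReal (σ ^ 2)) x := by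
  rw [pdf_eq hσ]
  positivity

lemma pdf_int (hσ : 0 < σ) (a b : ℝ) :
    IntervalIntegrable (gaussianPDFReal m (Real.toNNReal (σ ^ 2))) volume a b :=
  (pdf_cont hσ).intervalIntegrable a b

lemma pdf_lt_of_farther (hσ : 0 < σ) {x y : ℝ} (h : (x - m) ^ 2 < (y - m) ^ 2) :
    gaussianPDFReal m (Real.toNNReal (σ ^ 2)) y
      < gaussianPDFReal m (Real.toNNReal (σ ^ 2)) x := by
  rw [pdf_eq hσ, pdf_eq hσ]
  have hC : (0:ℝ) < (Real.sqrt (2 * π * σ ^ 2))⁻¹ := by positivity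
  apply mul_lt_mul_of_pos_left _ hC
  apply Real.exp_lt_exp.mpr
  have h2 : (0:ℝ) < 2 * σ ^ 2 := by positivity
  apply div_lt_div_of_pos_right ?_ h2 |>.trans_le le_rfl
  linarith

/-- Substitution: the gaussian interval integral in terms of `Egauss`. -/
lemma integral_pdf (hσ : 0 < σ) (a b : ℝ) :
    (∫ x in a..b, gaussianPDFReal m (Real.toNNReal (σ ^ 2)) x)
      = (Real.sqrt π)⁻¹ *
        (Egauss ((b - m) / (Real.sqrt 2 * σ)) - Egauss ((a - m) / (Real.sqrt 2 * σ))) := by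
  set c : ℝ := (Real.sqrt 2 * σ)⁻¹ with hc
  have hs2 : (0:ℝ) < Real.sqrt 2 := by positivity
  have hcpos : 0 < c := by positivity
  have hcne : c ≠ 0 := hcpos.ne'
  have hc2 : c ^ 2 = (2 * σ ^ 2)⁻¹ := by
    rw [hc, mul_inv, mul_pow, inv_pow, inv_pow, Real.sq_sqrt (by norm_num : (0:ℝ) ≤ 2), mul_inv]
  have harg : ∀ x : ℝ, -((x - m) * c) ^ 2 = -(x - m) ^ 2 / (2 * σ ^ 2) := by
    intro x
    rw [mul_pow, hc2]
    field_simp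
  have hpt : ∀ x : ℝ, gaussianPDFReal m (Real.toNNReal (σ ^ 2)) x
      = (Real.sqrt (2 * π * σ ^ 2))⁻¹ * Real.exp (-((x - m) * c) ^ 2) := by
    intro x
    rw [pdf_eq hσ, harg]
  calc (∫ x in a..b, gaussianPDFReal m (Real.toNNReal (σ ^ 2)) x)
      = ∫ x in a..b, (Real.sqrt (2 * π * σ ^ 2))⁻¹ * Real.exp (-((x - m) * c) ^ 2) := by
        apply intervalIntegral.integral_congr
        intro x _
        exact hpt x
    _ = (Real.sqrt (2 * π * σ ^ 2))⁻¹ * ∫ x in a..b, Real.exp (-((x - m) * c) ^ 2) := by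
        rw [intervalIntegral.integral_const_mul]
    _ = (Real.sqrt (2 * π * σ ^ 2))⁻¹ * ∫ x in (a - m)..(b - m), Real.exp (-(x * c) ^ 2) := by
        rw [intervalIntegral.integral_comp_sub_right (fun x => Real.exp (-(x * c) ^ 2)) m]
    _ = (Real.sqrt (2 * π * σ ^ 2))⁻¹ *
          (c⁻¹ • ∫ x in (a - m) * c..(b - m) * c, Real.exp (-x ^ 2)) := by
        rw [intervalIntegral.integral_comp_mul_right (fun x => Real.exp (-x ^ 2)) hcne]
    _ = (Real.sqrt (2 * π * σ ^ 2))⁻¹ * c⁻¹ *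
          (Egauss ((b - m) * c) - Egauss ((a - m) * c)) := by
        rw [Egauss_sub]
        simp [smul_eq_mul]
        ring
    _ = (Real.sqrt π)⁻¹ *
        (Egauss ((b - m) / (Real.sqrt 2 * σ)) - Egauss ((a - m) / (Real.sqrt 2 * σ))) := by
        have hsqrt : Real.sqrt (2 * π * σ ^ 2) = Real.sqrt 2 * Real.sqrt π * σ := by
          rw [Real.sqrt_mul (by positivity) (σ ^ 2), Real.sqrt_mul (by norm_num : (0:ℝ) ≤ 2) π,
            Real.sqrt_sq hσ.le]
        have h1 : (a - m) * c = (a - m) / (Real.sqrt 2 * σ) := by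
          rw [hc, div_eq_mul_inv]
        have h2 : (b - m) * c = (b - m) / (Real.sqrt 2 * σ) := by
          rw [hc, div_eq_mul_inv]
        rw [h1, h2, hsqrt, hc]
        congr 1
        rw [inv_inv, mul_inv]
        field_simp

/-- Value at the centered interval of half-length `r`. -/
lemma integral_pdf_centered (hσ : 0 < σ) (r : ℝ) :
    (∫ x in (m - r)..(m + r), gaussianPDFReal m (Real.toNNReal (σ ^ 2)) x)
      = (Real.sqrt π)⁻¹ * (2 * Egauss (r / (Real.sqrt 2 * σ))) := by
  rw [integral_pdf hσ]
  have h1 : m + r - m = r := by ring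
  have h2 : m - r - m = -r := by ring
  rw [h1, h2, neg_div, Egauss_neg]
  ring

/-- Shifted intervals to the right of center have smaller mass. -/
lemma shift_lt_right (hσ : 0 < σ) {r a : ℝ} (hr : 0 < r) (ha : m - r < a) :
    (∫ x in a..(a + 2 * r), gaussianPDFReal m (Real.toNNReal (σ ^ 2)) x)
      < ∫ x in (m - r)..(m + r), gaussianPDFReal m (Real.toNNReal (σ ^ 2)) x := by
  set f := gaussianPDFReal m (Real.toNNReal (σ ^ 2)) with hf
  have h1 : (∫ x in (m - r)..a, f x) + (∫ x in a..(a + 2 * r), f x)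
      = ∫ x in (m - r)..(a + 2 * r), f x :=
    intervalIntegral.integral_add_adjacent_intervals (pdf_int hσ _ _) (pdf_int hσ _ _)
  have h2 : (∫ x in (m - r)..(m + r), f x) + (∫ x in (m + r)..(a + 2 * r), f x)
      = ∫ x in (m - r)..(a + 2 * r), f x :=
    intervalIntegral.integral_add_adjacent_intervals (pdf_int hσ _ _) (pdf_int hσ _ _)
  have h3 : (∫ x in (m - r)..a, f (x + 2 * r)) = ∫ x in (m + r)..(a + 2 * r), f x := by
    have := intervalIntegral.integral_comp_add_right (a := m - r) (b := a) f (2 * r)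
    rw [this]
    congr 1
    ring
  have h5 : IntervalIntegrable (fun x => f (x + 2 * r)) volume (m - r) a :=
    (((pdf_cont hσ).comp (continuous_add_right (2 * r)))).intervalIntegrable _ _
  have h4 : 0 < ∫ x in (m - r)..a, (f x - f (x + 2 * r)) := by
    apply intervalIntegral.intervalIntegral_pos_of_pos_on
    · exact (pdf_int hσ _ _).sub h5
    · intro x hx
      have hcmp : (x - m) ^ 2 < (x + 2 * r - m) ^ 2 := by nlinarith [hx.1]
      have := pdf_lt_of_farther hσ hcmp
      rw [← hf] at this
      linarith
    · exact ha
  rw [intervalIntegral.integral_sub (pdf_int hσ _ _) h5, h3] at h4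
  linarith

/-- Shifted intervals to the left of center have smaller mass. -/
lemma shift_lt_left (hσ : 0 < σ) {r a : ℝ} (hr : 0 < r) (ha : a < m - r) :
    (∫ x in a..(a + 2 * r), gaussianPDFReal m (Real.toNNReal (σ ^ 2)) x)
      < ∫ x in (m - r)..(m + r), gaussianPDFReal m (Real.toNNReal (σ ^ 2)) x := by
  set f := gaussianPDFReal m (Real.toNNReal (σ ^ 2)) with hf
  have h1 : (∫ x in a..(m - r), f x) + (∫ x in (m - r)..(m + r), f x)
      = ∫ x in a..(m + r), f x :=
    intervalIntegral.integral_add_adjacent_intervals (pdf_int hσ _ _) (pdf_int hσ _ _)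
  have h2 : (∫ x in a..(a + 2 * r), f x) + (∫ x in (a + 2 * r)..(m + r), f x)
      = ∫ x in a..(m + r), f x :=
    intervalIntegral.integral_add_adjacent_intervals (pdf_int hσ _ _) (pdf_int hσ _ _)
  have h3 : (∫ x in a..(m - r), f (x + 2 * r)) = ∫ x in (a + 2 * r)..(m + r), f x := by
    have := intervalIntegral.integral_comp_add_right (a := a) (b := m - r) f (2 * r)
    rw [this]
    congr 1
    ring
  have h5 : IntervalIntegrable (fun x => f (x + 2 * r)) volume a (m - r) :=
    (((pdf_cont hσ).comp (continuous_add_right (2 * r)))).intervalIntegrable _ _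
  have h4 : 0 < ∫ x in a..(m - r), (f (x + 2 * r) - f x) := by
    apply intervalIntegral.intervalIntegral_pos_of_pos_on
    · exact h5.sub (pdf_int hσ _ _)
    · intro x hx
      have hcmp : (x + 2 * r - m) ^ 2 < (x - m) ^ 2 := by nlinarith [hx.2]
      have := pdf_lt_of_farther hσ hcmp
      rw [← hf] at this
      linarith
    · exact ha
  rw [intervalIntegral.integral_sub h5 (pdf_int hσ _ _), h3] at h4
  linarith

/-- Centered intervals: mass is strictly increasing in the half-length. -/
lemma center_mono (hσ : 0 < σ) {r1 r2 : ℝ} (h1 : 0 ≤ r1) (h12 : r1 < r2) :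
    (∫ x in (m - r1)..(m + r1), gaussianPDFReal m (Real.toNNReal (σ ^ 2)) x)
      < ∫ x in (m - r2)..(m + r2), gaussianPDFReal m (Real.toNNReal (σ ^ 2)) x := by
  set f := gaussianPDFReal m (Real.toNNReal (σ ^ 2)) with hf
  have ha : (∫ x in (m - r2)..(m - r1), f x) + (∫ x in (m - r1)..(m + r1), f x)
      = ∫ x in (m - r2)..(m + r1), f x :=
    intervalIntegral.integral_add_adjacent_intervals (pdf_int hσ _ _) (pdf_int hσ _ _)
  have hb : (∫ x in (m - r2)..(m + r1), f x) + (∫ x in (m + r1)..(m + r2), f x)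
      = ∫ x in (m - r2)..(m + r2), f x :=
    intervalIntegral.integral_add_adjacent_intervals (pdf_int hσ _ _) (pdf_int hσ _ _)
  have p1 : 0 < ∫ x in (m - r2)..(m - r1), f x :=
    intervalIntegral.intervalIntegral_pos_of_pos (pdf_int hσ _ _)
      (fun x => pdf_pos hσ x) (by linarith)
  have p2 : 0 < ∫ x in (m + r1)..(m + r2), f x :=
    intervalIntegral.intervalIntegral_pos_of_pos (pdf_int hσ _ _)
      (fun x => pdf_pos hσ x) (by linarith)
  linarith

lemma gauss_measure_Icc (hσ : 0 < σ) {a b : ℝ} (hab : a ≤ b) :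
    (gaussianReal m (Real.toNNReal (σ ^ 2))) (Set.Icc a b)
      = ENNReal.ofReal (∫ x in a..b, gaussianPDFReal m (Real.toNNReal (σ ^ 2)) x) := by
  have hv : Real.toNNReal (σ ^ 2) ≠ 0 := by
    simp only [ne_eq, Real.toNNReal_eq_zero, not_le]
    positivity
  rw [gaussianReal_apply_eq_integral m hv, MeasureTheory.integral_Icc_eq_integral_Ioc,
    ← intervalIntegral.integral_of_le hab]

end Gauss

/-- For a normal random variable with mean `m` and standard deviation `σ > 0` and any
`ρ ∈ (0,1)`, the interval centered at `m` of length `2^{3/2} · erf⁻¹(ρ) · σ` has probability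
mass exactly `ρ`, and any interval with probability mass `ρ` is at least this long; moreover
an interval of mass `ρ` of minimal length must be centered at `m`. -/
theorem shortest_prediction_interval
    (m σ ρ : ℝ) (hσ : 0 < σ) (hρ : ρ ∈ Set.Ioo (0:ℝ) 1) :
    (gaussianReal m (Real.toNNReal (σ ^ 2)))
        (Set.Icc (m - (2:ℝ) ^ ((3:ℝ)/2) * erfInv ρ * σ / 2)
                 (m + (2:ℝ) ^ ((3:ℝ)/2) * erfInv ρ * σ / 2)) = ENNReal.ofReal ρ ∧
    (∀ a b : ℝ, a ≤ b →
      (gaussianReal m (Real.toNNReal (σ ^ 2))) (Set.Icc a b) = ENNReal.ofReal ρ →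
        (2:ℝ) ^ ((3:ℝ)/2) * erfInv ρ * σ ≤ b - a) ∧
    (∀ a b : ℝ, a ≤ b →
      (gaussianReal m (Real.toNNReal (σ ^ 2))) (Set.Icc a b) = ENNReal.ofReal ρ →
      b - a = (2:ℝ) ^ ((3:ℝ)/2) * erfInv ρ * σ → (a + b) / 2 = m) := by
  have hc0 : erf (erfInv ρ) = ρ := erf_erfInv hρ
  have hc0p : 0 < erfInv ρ := erfInv_pos hρ
  have h32 : (2:ℝ) ^ ((3:ℝ)/2) = 2 * Real.sqrt 2 := by
    rw [show (3:ℝ)/2 = 1 + 1/2 by norm_num, Real.rpow_add (by norm_num : (0:ℝ) < 2),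
      Real.rpow_one, Real.sqrt_eq_rpow]
  set r : ℝ := Real.sqrt 2 * erfInv ρ * σ with hr
  have hs2 : (0:ℝ) < Real.sqrt 2 := by positivity
  have hrpos : 0 < r := by positivity
  have hhalf : (2:ℝ) ^ ((3:ℝ)/2) * erfInv ρ * σ / 2 = r := by rw [h32, hr]; ring
  have hlen : (2:ℝ) ^ ((3:ℝ)/2) * erfInv ρ * σ = 2 * r := by rw [h32, hr]; ring
  -- value of the centered interval
  have hcent : (∫ x in (m - r)..(m + r), gaussianPDFReal m (Real.toNNReal (σ ^ 2)) x) = ρ := by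
    rw [integral_pdf_centered hσ]
    have hq : r / (Real.sqrt 2 * σ) = erfInv ρ := by
      rw [hr]; field_simp
    rw [hq]
    conv_rhs => rw [← hc0]
    rw [erf_eq']
    ring
  refine ⟨?_, ?_, ?_⟩
  · rw [hhalf, gauss_measure_Icc hσ (by linarith), hcent]
  · intro a b hab hmass
    rw [gauss_measure_Icc hσ hab] at hmass
    have hInn : 0 ≤ ∫ x in a..b, gaussianPDFReal m (Real.toNNReal (σ ^ 2)) x :=
      intervalIntegral.integral_nonneg hab (fun x _ => (pdf_pos hσ x).le)
    have hI : (∫ x in a..b, gaussianPDFReal m (Real.toNNReal (σ ^ 2)) x) = ρ :=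
      (ENNReal.ofReal_eq_ofReal_iff hInn hρ.1.le).mp hmass
    rw [hlen]
    by_contra hcon
    push_neg at hcon
    have hablt : a < b := by
      rcases eq_or_lt_of_le hab with h | h
      · exfalso
        rw [← h, intervalIntegral.integral_same] at hI
        exact hρ.1.ne hI
      · exact h
    set r1 : ℝ := (b - a) / 2 with hr1
    have hr1pos : 0 < r1 := by rw [hr1]; linarith
    have hbeq : b = a + 2 * r1 := by rw [hr1]; ring
    have hle : (∫ x in a..b, gaussianPDFReal m (Real.toNNReal (σ ^ 2)) x)
        ≤ ∫ x in (m - r1)..(m + r1), gaussianPDFReal m (Real.toNNReal (σ ^ 2)) x := by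
      rcases lt_trichotomy a (m - r1) with h | h | h
      · rw [hbeq]; exact (shift_lt_left hσ hr1pos h).le
      · have : b = m + r1 := by rw [hbeq, h]; ring
        rw [h, this]
      · rw [hbeq]; exact (shift_lt_right hσ hr1pos h).le
    have hmono : (∫ x in (m - r1)..(m + r1), gaussianPDFReal m (Real.toNNReal (σ ^ 2)) x)
        < ∫ x in (m - r)..(m + r), gaussianPDFReal m (Real.toNNReal (σ ^ 2)) x := by
      apply center_mono hσ hr1pos.le
      rw [hr1]; linarith
    rw [hcent] at hmono
    linarith
  · intro a b hab hmass hblen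
    rw [gauss_measure_Icc hσ hab] at hmass
    have hInn : 0 ≤ ∫ x in a..b, gaussianPDFReal m (Real.toNNReal (σ ^ 2)) x :=
      intervalIntegral.integral_nonneg hab (fun x _ => (pdf_pos hσ x).le)
    have hI : (∫ x in a..b, gaussianPDFReal m (Real.toNNReal (σ ^ 2)) x) = ρ :=
      (ENNReal.ofReal_eq_ofReal_iff hInn hρ.1.le).mp hmass
    rw [hlen] at hblen
    have hbeq : b = a + 2 * r := by linarith
    have haeq : a = m - r := by
      rcases lt_trichotomy a (m - r) with h | h | h
      · exfalso
        have := shift_lt_left hσ hrpos h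
        rw [← hbeq, hI, hcent] at this
        exact lt_irrefl _ this
      · exact h
      · exfalso
        have := shift_lt_right hσ hrpos h
        rw [← hbeq, hI, hcent] at this
        exact lt_irrefl _ this
    rw [haeq] at hbeq
    rw [haeq, hbeq]
    ring
end

section
/- Fix q > 0 and for X > 4q define v(X) = ∫₀^X max{(q - d(X-d)/X)/q, 0} dd. Then v(X) = X - X²/(6q) + ((X-4q)/(6q))·√X·√(X-4q). -/
/-!
With `s = √X·√(X-4q)` and `d₁,₂ = (X ∓ s)/2`, the integrand is `(d - d₁)(d - d₂)/(qX)`.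
Its positive part integrates to the full integral over `[0, X]` minus the integral over
`[d₁, d₂]`, and `∫_{d₁}^{d₂} (t - d₁)(t - d₂) dt = -(d₂ - d₁)³/6 = -s³/6`; the identity
`s² = X(X - 4q)` turns the result into the stated closed form.
-/

open intervalIntegral Set

theorem integral_sub_mul_sub (a b u v : ℝ) : ∫ t in a..b, (t - u) * (t - v) =
    (b ^ 3 - a ^ 3) / 3 - (u + v) * (b ^ 2 - a ^ 2) / 2 + u * v * (b - a) := by
  have h : ∀ t : ℝ, (t - u) * (t - v) = t ^ 2 - (u + v) * t + u * v := fun t => by ring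
  simp only [h]
  rw [integral_add, integral_sub, integral_pow, integral_const_mul, integral_id, integral_const]
  · simp only [smul_eq_mul]; ring
  all_goals exact (by fun_prop : Continuous _).intervalIntegrable _ _

theorem integral_max_zero_eq_sub_of_nonpos_on {f : ℝ → ℝ} (hf : Continuous f) {a u v b : ℝ}
    (hau : a ≤ u) (huv : u ≤ v) (hvb : v ≤ b) (h_left : ∀ t ∈ Icc a u, 0 ≤ f t)
    (h_mid : ∀ t ∈ Icc u v, f t ≤ 0) (h_right : ∀ t ∈ Icc v b, 0 ≤ f t) :
    ∫ t in a..b, max (f t) 0 = (∫ t in a..b, f t) - ∫ t in u..v, f t := by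
  have hf₀ : Continuous fun t => max (f t) 0 := hf.max continuous_const
  have split : ∀ g : ℝ → ℝ, Continuous g →
      ∫ t in a..b, g t = (∫ t in a..u, g t) + (∫ t in u..v, g t) + ∫ t in v..b, g t := by
    intro g hg
    rw [integral_add_adjacent_intervals (hg.intervalIntegrable _ _) (hg.intervalIntegrable _ _),
      integral_add_adjacent_intervals (hg.intervalIntegrable _ _) (hg.intervalIntegrable _ _)]
  have e_left : ∫ t in a..u, max (f t) 0 = ∫ t in a..u, f t :=
    integral_congr fun t ht => max_eq_left (h_left t (uIcc_of_le hau ▸ ht))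
  have e_mid : ∫ t in u..v, max (f t) 0 = 0 := by
    rw [integral_congr fun t ht => max_eq_right (h_mid t (uIcc_of_le huv ▸ ht)), integral_zero]
  have e_right : ∫ t in v..b, max (f t) 0 = ∫ t in v..b, f t :=
    integral_congr fun t ht => max_eq_left (h_right t (uIcc_of_le hvb ▸ ht))
  rw [split _ hf₀, split _ hf, e_left, e_mid, e_right]
  ring

theorem integral_max_sub_mul_sub_zero {a u v b : ℝ} (hau : a ≤ u) (huv : u ≤ v) (hvb : v ≤ b) :
    ∫ t in a..b, max ((t - u) * (t - v)) 0 =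
      (b ^ 3 - a ^ 3) / 3 - (u + v) * (b ^ 2 - a ^ 2) / 2 + u * v * (b - a) + (v - u) ^ 3 / 6 := by
  rw [integral_max_zero_eq_sub_of_nonpos_on (by fun_prop) hau huv hvb, integral_sub_mul_sub,
    integral_sub_mul_sub]
  · ring
  · rintro t ⟨-, htu⟩
    exact mul_nonneg_of_nonpos_of_nonpos (by linarith) (by linarith)
  · rintro t ⟨hut, htv⟩
    exact mul_nonpos_of_nonneg_of_nonpos (by linarith) (by linarith)
  · rintro t ⟨hvt, -⟩
    exact mul_nonneg (by linarith) (by linarith)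

/-- If `X > 4q`, the value of an area of length `X` is
`v(X) = ∫₀^X max{(q - d(X-d)/X)/q, 0} dd = X - X²/(6q) + ((X-4q)/(6q))·√X·√(X-4q)`. -/
theorem area_value_long (q X : ℝ) (hq : 0 < q) (hX : 4 * q < X) :
    (∫ d in (0:ℝ)..X, max ((q - d * (X - d) / X) / q) 0) =
      X - X ^ 2 / (6 * q) + (X - 4 * q) / (6 * q) * Real.sqrt X * Real.sqrt (X - 4 * q) := by
  have hX₀ : 0 < X := by linarith
  set s := Real.sqrt X * Real.sqrt (X - 4 * q) with hs
  have hs₀ : 0 ≤ s := by positivity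
  have hs_sq : s ^ 2 = X * (X - 4 * q) := by
    rw [hs, mul_pow, Real.sq_sqrt hX₀.le, Real.sq_sqrt (by linarith)]
  have hsX : s ≤ X := by nlinarith
  rw [mul_assoc ((X - 4 * q) / (6 * q)), ← hs]
  clear_value s
  have factor : ∀ d,
      (q - d * (X - d) / X) / q = (d - (X - s) / 2) * (d - (X + s) / 2) / (q * X) := by
    intro d
    field_simp
    linear_combination hs_sq
  have pos_part_div : ∀ x : ℝ, max (x / (q * X)) 0 = max x 0 / (q * X) := fun x => by
    rw [← max_div_div_right (by positivity), zero_div]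
  simp_rw [factor, pos_part_div]
  rw [integral_div, integral_max_sub_mul_sub_zero (by linarith) (by linarith) (by linarith)]
  field_simp
  linear_combination (24 * s - 36 * X) * hs_sq
end

section
/- Fix q > 0 and define V(d) = d - d²/(6q) for 0 ≤ d ≤ 4q, and V(d) = d - d²/(6q) + ((d-4q)/(6q))·√d·√(d-4q) for d > 4q. Then V attains its unique global maximum on (0,∞) at d = 3q, with V(3q) = 3q/2. -/
/-- The benefit of expanding knowledge to distance `d` beyond the frontier. -/
noncomputable def Vexp (q d : ℝ) : ℝ :=
  if d ≤ 4 * q then d - d ^ 2 / (6 * q)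
  else d - d ^ 2 / (6 * q) + (d - 4 * q) / (6 * q) * Real.sqrt d * Real.sqrt (d - 4 * q)

/-!
On `[0, 4q]` the function is the parabola `d - d²/(6q) = 3q/2 - (d - 3q)²/(6q)`.
Beyond `4q`, since `d (d - 4q) = (d - 2q)² - 4q²`, the correction term is below
`(d - 4q)(d - 2q)/(6q)`, and adding this bound to the parabola gives exactly `4q/3 < 3q/2`.
-/

theorem sub_sq_div_lt_of_ne {q d : ℝ} (hq : 0 < q) (hd : d ≠ 3 * q) :
    d - d ^ 2 / (6 * q) < 3 * q / 2 := by
  have hsq : 0 < (d - 3 * q) ^ 2 := by positivity [sub_ne_zero.mpr hd]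
  have hid : 3 * q / 2 - (d - d ^ 2 / (6 * q)) = (d - 3 * q) ^ 2 / (6 * q) := by
    field_simp
    ring
  have : 0 < (d - 3 * q) ^ 2 / (6 * q) := by positivity
  linarith

theorem Real.sqrt_mul_sqrt_sub_two_mul_lt {a c : ℝ} (hc : 0 < c) (hca : c < a) :
    √a * √(a - 2 * c) < a - c := by
  rw [← Real.sqrt_mul (by linarith), Real.sqrt_lt' (by linarith)]
  nlinarith

theorem Vexp_three_mul {q : ℝ} (hq : 0 < q) : Vexp q (3 * q) = 3 * q / 2 := by
  rw [Vexp, if_pos (by linarith)]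
  field_simp
  ring

theorem Vexp_lt_of_four_mul_lt {q d : ℝ} (hq : 0 < q) (hd : 4 * q < d) :
    Vexp q d < 4 * q / 3 := by
  have hcoef : 0 < (d - 4 * q) / (6 * q) := div_pos (by linarith) (by linarith)
  have hroot : √d * √(d - 4 * q) < d - 2 * q := by
    simpa [show 2 * (2 * q) = 4 * q by ring] using
      Real.sqrt_mul_sqrt_sub_two_mul_lt (a := d) (c := 2 * q) (by linarith) (by linarith)
  have hbound : d - d ^ 2 / (6 * q) + (d - 4 * q) / (6 * q) * (d - 2 * q) = 4 * q / 3 := by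
    field_simp
    ring
  rw [Vexp, if_neg (not_le.mpr hd), mul_assoc]
  linarith [mul_lt_mul_of_pos_left hroot hcoef]

/-- `V` attains its unique global maximum on `(0,∞)` at `d = 3q`, with `V(3q) = 3q/2`. -/
theorem Vexp_max (q : ℝ) (hq : 0 < q) :
    Vexp q (3 * q) = 3 * q / 2 ∧
    ∀ d : ℝ, 0 < d → d ≠ 3 * q → Vexp q d < Vexp q (3 * q) := by
  refine ⟨Vexp_three_mul hq, fun d _ hne => ?_⟩
  rw [Vexp_three_mul hq]
  by_cases h : d ≤ 4 * q
  · rw [Vexp, if_pos h]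
    exact sub_sq_div_lt_of_ne hq hne
  · linarith [Vexp_lt_of_four_mul_lt hq (not_le.mp h)]
end

section
/- For all real τ > 4, (3 - τ)/3 + √((τ-4)/τ) · (τ-1)/3 < 0, and the left-hand side is strictly increasing in τ and tends to 0 as τ → ∞. -/
open Filter

noncomputable def expDenom (τ : ℝ) : ℝ :=
  3 * (τ * (τ - 3) + (τ - 1) * Real.sqrt (τ * (τ - 4)))

lemma expDenom_pos {τ : ℝ} (h : 4 < τ) : 0 < expDenom τ := by
  have h0 : 0 ≤ Real.sqrt (τ * (τ - 4)) := Real.sqrt_nonneg _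
  unfold expDenom; nlinarith

lemma expDenom_key {τ : ℝ} (h : 4 < τ) :
    (3 - τ) / 3 + Real.sqrt ((τ - 4) / τ) * (τ - 1) / 3 = -4 / expDenom τ := by
  have hτ : 0 < τ := by linarith
  have hu0 : 0 ≤ τ * (τ - 4) := by nlinarith
  set u := Real.sqrt (τ * (τ - 4)) with hu
  have hu2 : u ^ 2 = τ ^ 2 - 4 * τ := by
    rw [hu, Real.sq_sqrt hu0]; ring
  have hs : Real.sqrt ((τ - 4) / τ) = u / τ := by
    rw [show (τ - 4) / τ = (u / τ) ^ 2 by rw [div_pow, hu2]; field_simp]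
    exact Real.sqrt_sq (by positivity)
  have hD : expDenom τ ≠ 0 := ne_of_gt (expDenom_pos h)
  unfold expDenom at hD ⊢
  rw [← hu] at hD ⊢
  rw [hs, eq_div_iff hD]
  have hu2' : u * u = τ ^ 2 - 4 * τ := by nlinarith [hu2]
  field_simp
  ring_nf
  nlinarith [hu2, hu2']

lemma expDenom_mono : StrictMonoOn expDenom (Set.Ioi 4) := by
  intro a ha b hb hab
  simp only [Set.mem_Ioi] at ha hb
  have h1 : a * (a - 4) ≤ b * (b - 4) := by nlinarith
  have h2 : Real.sqrt (a * (a - 4)) ≤ Real.sqrt (b * (b - 4)) := Real.sqrt_le_sqrt h1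
  have h3 : 0 ≤ Real.sqrt (a * (a - 4)) := Real.sqrt_nonneg _
  have h4 : (a - 1) * Real.sqrt (a * (a - 4)) ≤ (b - 1) * Real.sqrt (b * (b - 4)) := by
    apply mul_le_mul (by linarith) h2 h3 (by linarith)
  unfold expDenom
  nlinarith

/-- For `τ > 4`, `(3-τ)/3 + √((τ-4)/τ)·(τ-1)/3 < 0`; the left-hand side is strictly
increasing on `(4,∞)` and tends to `0` as `τ → ∞`. -/
theorem expanding_derivative_negative :
    (∀ τ : ℝ, 4 < τ → (3 - τ) / 3 + Real.sqrt ((τ - 4) / τ) * (τ - 1) / 3 < 0) ∧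
    StrictMonoOn (fun τ : ℝ => (3 - τ) / 3 + Real.sqrt ((τ - 4) / τ) * (τ - 1) / 3)
      (Set.Ioi 4) ∧
    Tendsto (fun τ : ℝ => (3 - τ) / 3 + Real.sqrt ((τ - 4) / τ) * (τ - 1) / 3)
      atTop (nhds 0) := by
  refine ⟨?_, ?_, ?_⟩
  · intro τ hτ
    rw [expDenom_key hτ]
    exact div_neg_of_neg_of_pos (by norm_num) (expDenom_pos hτ)
  · intro a ha b hb hab
    simp only [Set.mem_Ioi] at ha hb
    simp only
    rw [expDenom_key ha, expDenom_key hb]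
    have hDa := expDenom_pos ha
    have hDb := expDenom_pos (show (4:ℝ) < b by exact hb)
    have hlt := expDenom_mono ha hb hab
    have h1 : 4 / expDenom b < 4 / expDenom a :=
      div_lt_div_of_pos_left (by norm_num) hDa hlt
    have e1 : (-4 : ℝ) / expDenom a = -(4 / expDenom a) := by ring
    have e2 : (-4 : ℝ) / expDenom b = -(4 / expDenom b) := by ring
    rw [e1, e2]
    linarith
  · have hD : Tendsto expDenom atTop atTop := by
      apply tendsto_atTop_mono' atTop (show ∀ᶠ τ in atTop, τ ≤ expDenom τ by
        filter_upwards [eventually_ge_atTop (4:ℝ)] with τ hτ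
        have h0 : 0 ≤ Real.sqrt (τ * (τ - 4)) := Real.sqrt_nonneg _
        unfold expDenom
        nlinarith) tendsto_id
    have hlim : Tendsto (fun τ => -4 / expDenom τ) atTop (nhds 0) := by
      have := (tendsto_inv_atTop_zero.comp hD).const_mul (-4 : ℝ)
      simpa [div_eq_mul_inv, Function.comp] using this
    apply hlim.congr'
    filter_upwards [eventually_gt_atTop (4:ℝ)] with τ hτ
    exact (expDenom_key hτ).symm
end

section
/- Fix q > 0. On the interval (4q, ∞), the function h(X) = X/(12q) - (X - 4q)^{3/2}/(6q·√X) is strictly concave, and its unique maximizer is X* = (8·cos(π/18)/√3)·q. -/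
/-!
With `r = q / X`, the derivative is `h'(X) = (1 - √(4 - 48 r² - 64 r³)) / (12 q)`.
The radicand increases with `X`, so `h'` is strictly decreasing and `h` is strictly
concave. The critical point solves `4 - 48 r² - 64 r³ = 1`, i.e. the depressed cubic
`3 X³ - 48 q² X - 64 q³ = 0`, whose root `X* > 4q` is given by Viète's formula from
`cos 3θ = 4 cos³ θ - 3 cos θ` at `θ = π / 18`. A strictly concave function has its
unique maximum at a critical point.
-/

open Real Set

lemma StrictConcaveOn.lt_of_hasDerivAt_eq_zero {S : Set ℝ} {f : ℝ → ℝ} {x c : ℝ}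
    (hf : StrictConcaveOn ℝ S f) (hc : c ∈ S) (hx : x ∈ S) (hxc : x ≠ c)
    (hfc : HasDerivAt f 0 c) : f x < f c := by
  rcases hxc.lt_or_gt with hlt | hgt
  · exact (slope_pos_iff_of_le hlt.le).1 (hf.lt_slope_of_hasDerivAt hx hc hlt hfc)
  · exact (slope_neg_iff_of_le hgt.le).1 (hf.slope_lt_of_hasDerivAt hc hx hgt hfc)

lemma Real.rpow_three_halves {x : ℝ} (hx : 0 ≤ x) : x ^ ((3 : ℝ) / 2) = √x ^ 3 := by
  rw [rpow_div_two_eq_sqrt 3 hx]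
  norm_cast

noncomputable def benefitRatio (q X : ℝ) : ℝ :=
  X / (12 * q) - (X - 4 * q) ^ ((3 : ℝ) / 2) / (6 * q * √X)

noncomputable def benefitRatioDeriv (q X : ℝ) : ℝ :=
  (1 - √(4 - 48 * (q / X) ^ 2 - 64 * (q / X) ^ 3)) / (12 * q)

noncomputable def optimalArea (q : ℝ) : ℝ := 8 * cos (π / 18) / √3 * q

section

variable {q X : ℝ}

lemma benefitRatio_eqOn_Ioi (q : ℝ) :
    EqOn (benefitRatio q) (fun X => X / (12 * q) - √(X - 4 * q) ^ 3 / (6 * q * √X))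
      (Ioi (4 * q)) := fun X hX => by
  rw [benefitRatio, rpow_three_halves (sub_nonneg.2 (le_of_lt hX))]

lemma benefitRatioDeriv_eq (hq : 0 < q) (hX : 4 * q < X) :
    benefitRatioDeriv q X = 1 / (12 * q) - (X + 2 * q) * √(X - 4 * q) / (6 * q * (X * √X)) := by
  have hX₀ : 0 < X := by linarith
  have hs : √(X - 4 * q) ^ 2 = X - 4 * q := sq_sqrt (by linarith)
  have ht : √X ^ 2 = X := sq_sqrt hX₀.le
  have ht₀ : 0 < √X := sqrt_pos.2 hX₀
  have hroot : √(4 - 48 * (q / X) ^ 2 - 64 * (q / X) ^ 3) =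
      2 * (X + 2 * q) * √(X - 4 * q) / (X * √X) := by
    rw [← sqrt_sq (by positivity : 0 ≤ 2 * (X + 2 * q) * √(X - 4 * q) / (X * √X))]
    congr 1
    field_simp
    rw [hs, ht]
    ring
  rw [benefitRatioDeriv, hroot]
  field_simp
  ring

lemma hasDerivAt_benefitRatio (hq : 0 < q) (hX : 4 * q < X) :
    HasDerivAt (benefitRatio q) (benefitRatioDeriv q X) X := by
  have hX₀ : 0 < X := by linarith
  have hs₀ : 0 < √(X - 4 * q) := sqrt_pos.2 (by linarith)
  have ht₀ : 0 < √X := sqrt_pos.2 hX₀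
  have hs : √(X - 4 * q) ^ 2 = X - 4 * q := sq_sqrt (by linarith)
  have ht : √X ^ 2 = X := sq_sqrt hX₀.le
  have hnum := (((hasDerivAt_id X).sub_const (4 * q)).sqrt (sub_pos.2 hX).ne').fun_pow 3
  have hden := (hasDerivAt_sqrt hX₀.ne').const_mul (6 * q)
  have hF := ((hasDerivAt_id X).div_const (12 * q)).sub (hnum.div hden (by positivity))
  refine (hF.congr_deriv ?_).congr_of_eventuallyEq
    ((benefitRatio_eqOn_Ioi q).eventuallyEq_of_mem (Ioi_mem_nhds hX))
  rw [benefitRatioDeriv_eq hq hX]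
  simp only [id]
  generalize √(X - 4 * q) = s at hs hs₀ ⊢
  generalize √X = t at ht ht₀ ⊢
  obtain rfl : X = t ^ 2 := ht.symm
  obtain rfl : q = (t ^ 2 - s ^ 2) / 4 := by linarith
  field_simp
  ring

lemma benefitRatioDeriv_strictAntiOn (hq : 0 < q) :
    StrictAntiOn (benefitRatioDeriv q) (Ioi (4 * q)) := by
  intro a ha b hb hab
  have ha₀ : 0 < a := by linarith [mem_Ioi.1 ha]
  have hb₀ : 0 < b := ha₀.trans hab
  have hrb : 0 < q / b := by positivity
  have hrab : q / b < q / a := div_lt_div_of_pos_left hq ha₀ hab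
  have hra : q / a < 1 / 4 := by rw [div_lt_iff₀ ha₀]; linarith [mem_Ioi.1 ha]
  have hroot : √(4 - 48 * (q / a) ^ 2 - 64 * (q / a) ^ 3) <
      √(4 - 48 * (q / b) ^ 2 - 64 * (q / b) ^ 3) := by
    apply sqrt_lt_sqrt
    · nlinarith
    · nlinarith [pow_lt_pow_left₀ hrab hrb.le two_ne_zero,
        pow_lt_pow_left₀ hrab hrb.le three_ne_zero]
  unfold benefitRatioDeriv
  gcongr

lemma strictConcaveOn_benefitRatio (hq : 0 < q) :
    StrictConcaveOn ℝ (Ioi (4 * q)) (benefitRatio q) := by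
  have hderiv (X : ℝ) (hX : X ∈ Ioi (4 * q)) := hasDerivAt_benefitRatio hq hX
  refine StrictAntiOn.strictConcaveOn_of_deriv (convex_Ioi _)
    (fun X hX => (hderiv X hX).continuousAt.continuousWithinAt) ?_
  rw [interior_Ioi]
  exact (benefitRatioDeriv_strictAntiOn hq).congr fun X hX => ((hderiv X hX).deriv).symm

end

lemma sqrt_three_div_two_lt_cos_pi_div_eighteen : √3 / 2 < cos (π / 18) := by
  rw [← cos_pi_div_six]
  exact cos_lt_cos_of_nonneg_of_le_pi (by positivity) (by linarith [pi_pos]) (by linarith [pi_pos])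

lemma four_mul_lt_optimalArea {q : ℝ} (hq : 0 < q) : 4 * q < optimalArea q := by
  have h := sqrt_three_div_two_lt_cos_pi_div_eighteen
  have h3 : 0 < √3 := by positivity
  have : 4 < 8 * cos (π / 18) / √3 := by rw [lt_div_iff₀ h3]; nlinarith
  unfold optimalArea
  nlinarith

lemma optimalArea_cubic (q : ℝ) :
    3 * optimalArea q ^ 3 - 48 * q ^ 2 * optimalArea q - 64 * q ^ 3 = 0 := by
  have h3 : √3 ^ 2 = 3 := sq_sqrt (by norm_num)
  have h3₀ : √3 ≠ 0 := by positivity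
  have hcos : 4 * cos (π / 18) ^ 3 - 3 * cos (π / 18) = √3 / 2 := by
    rw [← cos_three_mul, ← cos_pi_div_six]; ring_nf
  unfold optimalArea
  generalize cos (π / 18) = c at hcos
  generalize √3 = r at h3 h3₀ hcos ⊢
  field_simp
  linear_combination q ^ 3 * (384 * hcos - (384 * c + 64 * r) * h3)

lemma benefitRatioDeriv_optimalArea {q : ℝ} (hq : 0 < q) :
    benefitRatioDeriv q (optimalArea q) = 0 := by
  have hX : 0 < optimalArea q := by linarith [four_mul_lt_optimalArea hq]
  have hcubic := optimalArea_cubic q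
  have : 4 - 48 * (q / optimalArea q) ^ 2 - 64 * (q / optimalArea q) ^ 3 = 1 := by
    field_simp
    linear_combination hcubic
  rw [benefitRatioDeriv, this, sqrt_one, sub_self, zero_div]

/-- For `q > 0`, the function `h(X) = X/(12q) - (X-4q)^{3/2}/(6q·√X)` is strictly concave on
`(4q, ∞)` and its unique maximizer there is `X* = (8·cos(π/18)/√3)·q`. -/
theorem midpoint_benefit_ratio_concave_max (q : ℝ) (hq : 0 < q) :
    StrictConcaveOn ℝ (Set.Ioi (4 * q))
      (fun X : ℝ => X / (12 * q) - (X - 4 * q) ^ ((3:ℝ)/2) / (6 * q * Real.sqrt X)) ∧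
    8 * Real.cos (Real.pi / 18) / Real.sqrt 3 * q ∈ Set.Ioi (4 * q) ∧
    (∀ X ∈ Set.Ioi (4 * q), X ≠ 8 * Real.cos (Real.pi / 18) / Real.sqrt 3 * q →
      X / (12 * q) - (X - 4 * q) ^ ((3:ℝ)/2) / (6 * q * Real.sqrt X) <
        (8 * Real.cos (Real.pi / 18) / Real.sqrt 3 * q) / (12 * q) -
          (8 * Real.cos (Real.pi / 18) / Real.sqrt 3 * q - 4 * q) ^ ((3:ℝ)/2) /
            (6 * q * Real.sqrt (8 * Real.cos (Real.pi / 18) / Real.sqrt 3 * q))) := by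
  have hconcave := strictConcaveOn_benefitRatio hq
  have hmem := four_mul_lt_optimalArea hq
  have hcrit : HasDerivAt (benefitRatio q) 0 (optimalArea q) :=
    benefitRatioDeriv_optimalArea hq ▸ hasDerivAt_benefitRatio hq hmem
  exact ⟨hconcave, hmem, fun X hX hne => hconcave.lt_of_hasDerivAt_eq_zero hmem hX hne hcrit⟩
end

section
/- For m > 4, the equation m/(m-1) = 2√((m-4)/m) has a unique solution, namely m = (2/3)·(4 + (19 - 3√2)^{1/3} + (19 + 3√2)^{1/3}); moreover on (4,∞) the left-hand side is strictly decreasing and the right-hand side strictly increasing. -/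
/-- On `(4,∞)` the map `m ↦ m/(m-1)` is strictly decreasing, `m ↦ 2√((m-4)/m)` is strictly
increasing, and the equation `m/(m-1) = 2√((m-4)/m)` has the unique solution
`m = (2/3)(4 + (19-3√2)^{1/3} + (19+3√2)^{1/3})`. -/
theorem optimal_area_equation :
    StrictAntiOn (fun m : ℝ => m / (m - 1)) (Set.Ioi 4) ∧
    StrictMonoOn (fun m : ℝ => 2 * Real.sqrt ((m - 4) / m)) (Set.Ioi 4) ∧
    (2 / 3 * (4 + (19 - 3 * Real.sqrt 2) ^ ((1:ℝ)/3) + (19 + 3 * Real.sqrt 2) ^ ((1:ℝ)/3))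
      ∈ Set.Ioi (4:ℝ)) ∧
    (∀ m : ℝ, 4 < m →
      (m / (m - 1) = 2 * Real.sqrt ((m - 4) / m) ↔
        m = 2 / 3 * (4 + (19 - 3 * Real.sqrt 2) ^ ((1:ℝ)/3)
              + (19 + 3 * Real.sqrt 2) ^ ((1:ℝ)/3)))) := by
  have sqrt2 : Real.sqrt 2 < 2 := by
    nlinarith [Real.sq_sqrt (by norm_num : (0:ℝ) ≤ 2), Real.sqrt_nonneg 2]
  have sqrt2' : (0:ℝ) ≤ Real.sqrt 2 := Real.sqrt_nonneg 2
  -- monotonicity facts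
  have h1 : StrictAntiOn (fun m : ℝ => m / (m - 1)) (Set.Ioi 4) := by
    intro x hx y hy hxy
    simp only [Set.mem_Ioi] at hx hy
    have hx1 : (0:ℝ) < x - 1 := by linarith
    have hy1 : (0:ℝ) < y - 1 := by linarith
    rw [div_lt_div_iff₀ hy1 hx1]
    nlinarith
  have h2 : StrictMonoOn (fun m : ℝ => 2 * Real.sqrt ((m - 4) / m)) (Set.Ioi 4) := by
    intro x hx y hy hxy
    simp only [Set.mem_Ioi] at hx hy
    have hx0 : (0:ℝ) < x := by linarith
    have hy0 : (0:ℝ) < y := by linarith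
    have harg : (x - 4) / x < (y - 4) / y := by
      rw [div_lt_div_iff₀ hx0 hy0]; nlinarith
    have hnn : (0:ℝ) ≤ (x - 4) / x := div_nonneg (by linarith) (by linarith)
    have := Real.sqrt_lt_sqrt hnn harg
    simpa using by linarith [this]
  -- the cube roots
  set a : ℝ := (19 - 3 * Real.sqrt 2) ^ ((1:ℝ)/3) with ha
  set b : ℝ := (19 + 3 * Real.sqrt 2) ^ ((1:ℝ)/3) with hb
  have hA : (0:ℝ) ≤ 19 - 3 * Real.sqrt 2 := by nlinarith
  have hB : (0:ℝ) ≤ 19 + 3 * Real.sqrt 2 := by nlinarith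
  have cube : ∀ x : ℝ, 0 ≤ x → (x ^ ((1:ℝ)/3)) ^ 3 = x := by
    intro x hx
    rw [← Real.rpow_natCast (x ^ ((1:ℝ)/3)) 3, ← Real.rpow_mul hx]
    norm_num
  have ha3 : a ^ 3 = 19 - 3 * Real.sqrt 2 := cube _ hA
  have hb3 : b ^ 3 = 19 + 3 * Real.sqrt 2 := cube _ hB
  have hab : a * b = 7 := by
    rw [ha, hb, ← Real.mul_rpow hA hB]
    have h343 : (19 - 3 * Real.sqrt 2) * (19 + 3 * Real.sqrt 2) = 343 := by
      have h2 : Real.sqrt 2 ^ 2 = 2 := Real.sq_sqrt (by norm_num)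
      nlinarith [h2]
    rw [h343]
    have : (343:ℝ) = 7 ^ (3:ℕ) := by norm_num
    rw [this, ← Real.rpow_natCast (7:ℝ) 3, ← Real.rpow_mul (by norm_num)]
    norm_num
  have hb0 : (0:ℝ) < b := Real.rpow_pos_of_pos (by nlinarith) _
  have ha0 : (0:ℝ) < a := by nlinarith
  have hb2 : (2:ℝ) ≤ b := by
    have h8 : ((2:ℝ)) = 8 ^ ((1:ℝ)/3) := by
      have : (8:ℝ) = 2 ^ (3:ℕ) := by norm_num
      rw [this, ← Real.rpow_natCast (2:ℝ) 3, ← Real.rpow_mul (by norm_num)]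
      norm_num
    rw [h8, hb]
    exact Real.rpow_le_rpow (by norm_num) (by nlinarith) (by norm_num)
  have hs : (a + b) ^ 3 = 38 + 21 * (a + b) := by
    linear_combination ha3 + hb3 + (3 * (a + b)) * hab
  set m₀ : ℝ := 2 / 3 * (4 + a + b) with hm₀
  have hm₀4 : (4:ℝ) < m₀ := by rw [hm₀]; nlinarith
  have hcubic₀ : 3 * m₀ ^ 3 - 24 * m₀ ^ 2 + 36 * m₀ - 16 = 0 := by
    rw [hm₀]; linear_combination (8/9) * hs
  -- any m > 4 satisfies the equation iff it satisfies the cubic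
  have key : ∀ m : ℝ, 4 < m →
      (m / (m - 1) = 2 * Real.sqrt ((m - 4) / m) ↔
        3 * m ^ 3 - 24 * m ^ 2 + 36 * m - 16 = 0) := by
    intro m hm
    have hm0 : (0:ℝ) < m := by linarith
    have hm1 : (0:ℝ) < m - 1 := by linarith
    have hnn : (0:ℝ) ≤ (m - 4) / m := div_nonneg (by linarith) (by linarith)
    constructor
    · intro heq
      have hsq : (m / (m - 1)) ^ 2 = 4 * ((m - 4) / m) := by
        rw [heq]; rw [mul_pow]
        rw [Real.sq_sqrt hnn]; ring
      field_simp at hsq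
      nlinarith [hsq]
    · intro hc
      have harg : (m - 4) / m = (m / (2 * (m - 1))) ^ 2 := by
        field_simp
        nlinarith [hc]
      rw [harg, Real.sqrt_sq (by positivity)]
      field_simp
  -- m₀ satisfies the equation
  have heq₀ : m₀ / (m₀ - 1) = 2 * Real.sqrt ((m₀ - 4) / m₀) := (key m₀ hm₀4).mpr hcubic₀
  refine ⟨h1, h2, hm₀4, fun m hm => ⟨fun heq => ?_, fun heq => by rw [heq]; exact heq₀⟩⟩
  rcases lt_trichotomy m m₀ with h | h | h
  · exfalso
    have hL := h1 hm (Set.mem_Ioi.mpr hm₀4) h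
    have hR := h2 hm (Set.mem_Ioi.mpr hm₀4) h
    simp only at hL hR
    rw [heq, heq₀] at hL
    linarith
  · exact h
  · exfalso
    have hL := h1 (Set.mem_Ioi.mpr hm₀4) hm h
    have hR := h2 (Set.mem_Ioi.mpr hm₀4) hm h
    simp only at hL hR
    rw [heq, heq₀] at hL
    linarith
end
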